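/- For nonnegative n×n matrices A₁,…,A_m and any index i, r_{e_i}(A₁ ∘ ⋯ ∘ A_m) ≤ r_{e_i}(A₁) ⋯ r_{e_i}(A_m), where ∘ is the Hadamard product and r_{e_i} the max-algebra local spectral radius. -/
import Mathlib


open Filter Finset

noncomputable section

/-- Max-algebra product of matrices: `(A ⊗ B) i j = max_l A i l * B l j`. -/
def maxMul {n : ℕ} (A B : Matrix (Fin n) (Fin n) ℝ) : Matrix (Fin n) (Fin n) ℝ :=
  fun i j => ⨆ l, A i l * B l j

/-- Max-algebra powers `A^k_⊗`. -/
def maxPow {n : ℕ} (A : Matrix (Fin n) (Fin n) ℝ) : ℕ → Matrix (Fin n) (Fin n) ℝ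
  | 0 => fun i j => if i = j then 1 else 0
  | k + 1 => maxMul (maxPow A k) A

/-- Max-algebra action of a matrix on a vector: `(A ⊗ x) i = max_j A i j * x j`. -/
def maxVecMul {n : ℕ} (A : Matrix (Fin n) (Fin n) ℝ) (x : Fin n → ℝ) : Fin n → ℝ :=
  fun i => ⨆ j, A i j * x j

/-- Max norm of a vector: `‖x‖ = max_i x i`. -/
def vnorm {n : ℕ} (x : Fin n → ℝ) : ℝ := ⨆ i, x i

/-- Max entry norm of a matrix: `‖A‖ = max_{i,j} A i j`. -/
def matNorm {n : ℕ} (A : Matrix (Fin n) (Fin n) ℝ) : ℝ := ⨆ i, ⨆ j, A i j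

/-- Max-algebra local spectral radius `r_x(A) = lim_k ‖A^k_⊗ ⊗ x‖^{1/k}`
(the limit exists, so we may define it as the `limsup`). -/
def rloc {n : ℕ} (A : Matrix (Fin n) (Fin n) ℝ) (x : Fin n → ℝ) : ℝ :=
  Filter.atTop.limsup fun k : ℕ => (vnorm (maxVecMul (maxPow A k) x)) ^ ((k : ℝ)⁻¹)

/-- Classical local spectral radius `ρ_x(A) = limsup_k ‖A^k x‖^{1/k}`. -/
def rhox {n : ℕ} (A : Matrix (Fin n) (Fin n) ℝ) (x : Fin n → ℝ) : ℝ :=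
  Filter.atTop.limsup fun k : ℕ => (vnorm ((A ^ k).mulVec x)) ^ ((k : ℝ)⁻¹)

/-- Hadamard (entrywise) power `A^{(t)} = [a_{ij}^t]`. -/
def hadPow {n : ℕ} (A : Matrix (Fin n) (Fin n) ℝ) (t : ℝ) : Matrix (Fin n) (Fin n) ℝ :=
  fun i j => (A i j) ^ t

/-- The `i`-th standard basis vector. -/
def e {n : ℕ} (i : Fin n) : Fin n → ℝ := fun j => if j = i then 1 else 0

end
noncomputable section Helpers

lemma maxPow_nonneg {n : ℕ} {B : Matrix (Fin n) (Fin n) ℝ} (hB : ∀ p q, 0 ≤ B p q) :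
    ∀ k p q, 0 ≤ maxPow B k p q := by
  intro k
  induction k with
  | zero => intro p q; simp only [maxPow]; split <;> norm_num
  | succ k ih =>
    intro p q
    exact Real.iSup_nonneg fun j => mul_nonneg (ih p j) (hB j q)

lemma le_matNorm {n : ℕ} (B : Matrix (Fin n) (Fin n) ℝ) (p q : Fin n) : B p q ≤ matNorm B :=
  le_trans (le_ciSup (Finite.bddAbove_range _) q)
    (le_ciSup (α := ℝ) (f := fun i => ⨆ j, B i j) (Finite.bddAbove_range _) p)

lemma maxPow_le_pow {n : ℕ} {B : Matrix (Fin n) (Fin n) ℝ} (hB : ∀ p q, 0 ≤ B p q) :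
    ∀ k p q, maxPow B k p q ≤ (max 1 (matNorm B)) ^ k := by
  intro k
  induction k with
  | zero => intro p q; simp only [maxPow, pow_zero]; split <;> norm_num
  | succ k ih =>
    intro p q
    haveI : Nonempty (Fin n) := ⟨p⟩
    apply ciSup_le
    intro j
    rw [pow_succ]
    exact mul_le_mul (ih p j) (le_trans (le_matNorm B j q) (le_max_right _ _))
      (hB j q) (pow_nonneg (le_trans zero_le_one (le_max_left _ _)) k)

lemma maxPow_hadamard_le {n m : ℕ} (A : Fin m → Matrix (Fin n) (Fin n) ℝ)
    (hA : ∀ l p q, 0 ≤ A l p q) :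
    ∀ k p q, maxPow (fun p q => ∏ l, A l p q) k p q ≤ ∏ l, maxPow (A l) k p q := by
  intro k
  induction k with
  | zero =>
    intro p q
    simp only [maxPow]
    split
    · simp
    · exact prod_nonneg fun l _ => by norm_num
  | succ k ih =>
    intro p q
    haveI : Nonempty (Fin n) := ⟨p⟩
    show maxMul _ _ p q ≤ _
    simp only [maxMul]
    apply ciSup_le
    intro j
    calc maxPow (fun p q => ∏ l, A l p q) k p j * ∏ l, A l j q
        ≤ (∏ l, maxPow (A l) k p j) * ∏ l, A l j q := by
          apply mul_le_mul_of_nonneg_right (ih p j) (prod_nonneg fun l _ => hA l j q)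
      _ = ∏ l, (maxPow (A l) k p j * A l j q) := by rw [prod_mul_distrib]
      _ ≤ ∏ l, ⨆ j', maxPow (A l) k p j' * A l j' q := by
          apply prod_le_prod (fun l _ => mul_nonneg (maxPow_nonneg (hA l) k p j) (hA l j q))
          intro l _
          exact le_ciSup (f := fun j' => maxPow (A l) k p j' * A l j' q) (Finite.bddAbove_range _) j

/-- The key quantity `F B k = ‖B^k ⊗ e_i‖`. -/
def Fv {n : ℕ} (B : Matrix (Fin n) (Fin n) ℝ) (i : Fin n) (k : ℕ) : ℝ :=
  vnorm (maxVecMul (maxPow B k) (e i))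

lemma e_nonneg {n : ℕ} (i j : Fin n) : 0 ≤ e i j := by unfold e; split <;> norm_num
lemma e_le_one {n : ℕ} (i j : Fin n) : e i j ≤ 1 := by unfold e; split <;> norm_num

lemma Fv_nonneg {n : ℕ} {B : Matrix (Fin n) (Fin n) ℝ} (hB : ∀ p q, 0 ≤ B p q)
    (i : Fin n) (k : ℕ) : 0 ≤ Fv B i k := by
  unfold Fv vnorm maxVecMul
  exact Real.iSup_nonneg fun p => Real.iSup_nonneg fun j =>
    mul_nonneg (maxPow_nonneg hB k p j) (e_nonneg i j)

lemma Fv_le {n : ℕ} {B : Matrix (Fin n) (Fin n) ℝ} (hB : ∀ p q, 0 ≤ B p q)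
    (i : Fin n) (k : ℕ) : Fv B i k ≤ (max 1 (matNorm B)) ^ k := by
  haveI : Nonempty (Fin n) := ⟨i⟩
  unfold Fv vnorm maxVecMul
  apply ciSup_le; intro p
  apply ciSup_le; intro j
  calc maxPow B k p j * e i j ≤ (max 1 (matNorm B)) ^ k * 1 :=
        mul_le_mul (maxPow_le_pow hB k p j) (e_le_one i j) (e_nonneg i j)
          (pow_nonneg (le_trans zero_le_one (le_max_left _ _)) k)
    _ = _ := mul_one _

lemma Fv_hadamard_le {n m : ℕ} (A : Fin m → Matrix (Fin n) (Fin n) ℝ)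
    (hA : ∀ l p q, 0 ≤ A l p q) (i : Fin n) (k : ℕ) :
    Fv (fun p q => ∏ l, A l p q) i k ≤ ∏ l, Fv (A l) i k := by
  haveI : Nonempty (Fin n) := ⟨i⟩
  conv_lhs => unfold Fv vnorm maxVecMul
  apply ciSup_le; intro p
  apply ciSup_le; intro j
  by_cases hj : j = i
  · subst hj
    have h1 : maxPow (fun p q => ∏ l, A l p q) k p j * e j j
        ≤ ∏ l, maxPow (A l) k p j := by
      have he : e j j = 1 := by simp [e]
      rw [he, mul_one]
      exact maxPow_hadamard_le A hA k p j
    refine le_trans h1 (prod_le_prod (fun l _ => maxPow_nonneg (hA l) k p j) ?_)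
    intro l _
    have h2 : maxPow (A l) k p j = maxPow (A l) k p j * e j j := by
      simp [e]
    rw [h2]
    calc maxPow (A l) k p j * e j j ≤ maxVecMul (maxPow (A l) k) (e j) p := by
          unfold maxVecMul
          exact le_ciSup (f := fun j' => maxPow (A l) k p j' * e j j') (Finite.bddAbove_range _) j
      _ ≤ Fv (A l) j k := by
          unfold Fv vnorm
          exact le_ciSup (f := fun p' => maxVecMul (maxPow (A l) k) (e j) p') (Finite.bddAbove_range _) p
  · have : e i j = 0 := by simp [e, hj]
    rw [this, mul_zero]
    exact prod_nonneg fun l _ => Fv_nonneg (hA l) i k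
end Helpers

/-- `r_{e_i}(A₁ ∘ ⋯ ∘ A_m) ≤ r_{e_i}(A₁) ⋯ r_{e_i}(A_m)`. -/
theorem stmt13 {n m : ℕ} (A : Fin m → Matrix (Fin n) (Fin n) ℝ)
    (hA : ∀ l i j, 0 ≤ A l i j) (i : Fin n) :
    rloc (fun p q => ∏ l, A l p q) (e i) ≤ ∏ l, rloc (A l) (e i) := by
  classical
  set HP : Matrix (Fin n) (Fin n) ℝ := fun p q => ∏ l, A l p q with hHP
  set f : ℕ → ℝ := fun k => (Fv HP i k) ^ ((k : ℝ)⁻¹) with hf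
  set g : Fin m → ℕ → ℝ := fun l k => (Fv (A l) i k) ^ ((k : ℝ)⁻¹) with hg
  have hHPnn : ∀ p q, 0 ≤ HP p q := fun p q => prod_nonneg fun l _ => hA l p q
  have hgnn : ∀ l k, 0 ≤ g l k := fun l k => Real.rpow_nonneg (Fv_nonneg (hA l) i k) _
  have hfnn : ∀ k, 0 ≤ f k := fun k => Real.rpow_nonneg (Fv_nonneg hHPnn i k) _
  have hfg : ∀ k, f k ≤ ∏ l, g l k := by
    intro k
    calc f k ≤ (∏ l, Fv (A l) i k) ^ ((k : ℝ)⁻¹) :=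
          Real.rpow_le_rpow (Fv_nonneg hHPnn i k) (Fv_hadamard_le A hA i k) (by positivity)
      _ = ∏ l, g l k :=
          Real.finset_prod_rpow univ _ (fun l _ => Fv_nonneg (hA l) i k) _ |>.symm
  have hgb : ∀ l, Filter.IsBoundedUnder (· ≤ ·) Filter.atTop (g l) := by
    intro l
    refine Filter.isBoundedUnder_of ⟨max 1 (matNorm (A l)), fun k => ?_⟩
    have hC1 : (1 : ℝ) ≤ max 1 (matNorm (A l)) := le_max_left _ _
    rcases Nat.eq_zero_or_pos k with hk | hk
    · subst hk
      simp only [hg, Nat.cast_zero, inv_zero, Real.rpow_zero]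
      exact hC1
    · calc g l k ≤ ((max 1 (matNorm (A l))) ^ k) ^ ((k : ℝ)⁻¹) :=
            Real.rpow_le_rpow (Fv_nonneg (hA l) i k) (Fv_le (hA l) i k) (by positivity)
        _ = max 1 (matNorm (A l)) := by
            rw [← Real.rpow_natCast (max 1 (matNorm (A l))) k,
              ← Real.rpow_mul (le_trans zero_le_one hC1),
              mul_inv_cancel₀ (by exact_mod_cast hk.ne'), Real.rpow_one]
  have hfc : Filter.IsCoboundedUnder (· ≤ ·) Filter.atTop f :=
    Filter.IsBoundedUnder.isCoboundedUnder_le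
      (Filter.isBoundedUnder_of ⟨0, fun k => hfnn k⟩)
  have hrg : ∀ l, rloc (A l) (e i) = Filter.atTop.limsup (g l) := fun l => rfl
  have key : ∀ ε : ℝ, 0 < ε →
      Filter.atTop.limsup f ≤ ∏ l, (rloc (A l) (e i) + ε) := by
    intro ε hε
    have hev : ∀ l, ∀ᶠ k in Filter.atTop, g l k < rloc (A l) (e i) + ε := by
      intro l
      rw [hrg l]
      exact Filter.eventually_lt_of_limsup_lt (lt_add_of_pos_right _ hε) (hgb l)
    have hall : ∀ᶠ k in Filter.atTop, ∀ l, g l k < rloc (A l) (e i) + ε :=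
      Filter.eventually_all.2 hev
    apply Filter.limsup_le_of_le hfc
    filter_upwards [hall] with k hk
    calc f k ≤ ∏ l, g l k := hfg k
      _ ≤ ∏ l, (rloc (A l) (e i) + ε) :=
          prod_le_prod (fun l _ => hgnn l k) (fun l _ => (hk l).le)
  have tends : Filter.Tendsto (fun ε : ℝ => ∏ l, (rloc (A l) (e i) + ε)) (nhdsWithin 0 (Set.Ioi 0))
      (nhds (∏ l, rloc (A l) (e i))) := by
    have hc : Continuous fun ε : ℝ => ∏ l, (rloc (A l) (e i) + ε) := by
      apply continuous_finset_prod
      intro l _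
      exact continuous_const.add continuous_id
    have h0 := hc.tendsto 0
    simp only [add_zero] at h0
    exact h0.mono_left nhdsWithin_le_nhds
  have : rloc HP (e i) = Filter.atTop.limsup f := rfl
  rw [this]
  refine ge_of_tendsto tends ?_
  filter_upwards [self_mem_nhdsWithin] with ε hε
  exact key ε hε
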